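/- arXiv:2301.08211 — 2 statements merged into one kernel-verified Lean document; each statement's English description precedes it below -/
import Mathlib

section
/- The identity ∑_{n=1}^∞ n·cosh(ny)/sinh³(ny) = ∑_{n=1}^∞ n²/sinh²(ny) holds for every real y > 0. -/
/-!
With `q = e^{-2x}` one has `1 / sinh² x = 4q / (1 - q)²` and `cosh x / sinh³ x = 4q(1 + q) / (1 - q)³`,
whose power series give `1 / sinh² x = 4 ∑ m q^m` and `cosh x / sinh³ x = 4 ∑ m² q^m` (sums over
`m ≥ 1`). Hence both sides of the identity are iterated sums of the nonnegative double series
`∑_{n, m ≥ 1} 4 n m² e^{-2nmy}`, once summing over `m` first and once over `n` first. This double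
series converges, being dominated by a product of two convergent series, so the two iterated sums
agree.
-/

open Real

section GeometricSeries

variable {𝕜 : Type*} [NormedField 𝕜] {r : 𝕜}

lemma hasSum_succ_mul_geometric (hr : ‖r‖ < 1) :
    HasSum (fun m : ℕ ↦ ((m : 𝕜) + 1) * r ^ m) (1 / (1 - r) ^ 2) := by
  refine (hasSum_choose_mul_geometric_of_norm_lt_one 1 hr).congr_fun fun m ↦ ?_
  simp

lemma hasSum_succ_sq_mul_geometric (hr : ‖r‖ < 1) :
    HasSum (fun m : ℕ ↦ ((m : 𝕜) + 1) ^ 2 * r ^ m) ((1 + r) / (1 - r) ^ 3) := by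
  have hr1 : 1 - r ≠ 0 := sub_ne_zero.2 (ne_of_apply_ne norm (by simpa using hr.ne'))
  have h := ((hasSum_choose_mul_geometric_of_norm_lt_one 2 hr).mul_left 2).sub
    (hasSum_choose_mul_geometric_of_norm_lt_one 1 hr)
  rw [show (2 : 𝕜) * (1 / (1 - r) ^ (2 + 1)) - 1 / (1 - r) ^ (1 + 1) = (1 + r) / (1 - r) ^ 3 by
    field_simp; ring] at h
  refine h.congr_fun fun m ↦ ?_
  have hchoose : (((m + 2).choose 2 : ℕ) : 𝕜) * 2 = (m + 2) * (m + 1) := by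
    have h2 : (m + 2).choose 2 * 2 = (m + 2) * (m + 1) := by
      simpa using (Nat.add_one_mul_choose_eq (m + 1) 1).symm
    simpa using congrArg (Nat.cast : ℕ → 𝕜) h2
  push_cast [Nat.choose_one_right]
  linear_combination (-r ^ m) * hchoose

end GeometricSeries

lemma sinh_eq_exp_mul (x : ℝ) : sinh x = exp x * (1 - exp (-2 * x)) / 2 := by
  rw [sinh_eq, mul_sub, mul_one, ← exp_add]; ring_nf

lemma cosh_eq_exp_mul (x : ℝ) : cosh x = exp x * (1 + exp (-2 * x)) / 2 := by
  rw [cosh_eq, mul_add, mul_one, ← exp_add]; ring_nf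

lemma exp_mul_exp_neg_two_mul (x : ℝ) : exp x ^ 2 * exp (-2 * x) = 1 := by
  rw [← exp_nat_mul, ← exp_add]; simp

lemma one_div_sinh_sq_eq {x : ℝ} (hx : x ≠ 0) :
    1 / sinh x ^ 2 = 4 * exp (-2 * x) / (1 - exp (-2 * x)) ^ 2 := by
  have hq : 1 - exp (-2 * x) ≠ 0 := by
    rw [sub_ne_zero, ne_comm, Ne, exp_eq_one_iff]; simpa using hx
  have hqe := exp_mul_exp_neg_two_mul x
  rw [sinh_eq_exp_mul]
  generalize exp (-2 * x) = q at *
  field_simp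
  linear_combination -4 * hqe

lemma cosh_div_sinh_pow_three_eq {x : ℝ} (hx : x ≠ 0) :
    cosh x / sinh x ^ 3 = 4 * exp (-2 * x) * (1 + exp (-2 * x)) / (1 - exp (-2 * x)) ^ 3 := by
  have hq : 1 - exp (-2 * x) ≠ 0 := by
    rw [sub_ne_zero, ne_comm, Ne, exp_eq_one_iff]; simpa using hx
  have hqe := exp_mul_exp_neg_two_mul x
  rw [sinh_eq_exp_mul, cosh_eq_exp_mul]
  generalize exp (-2 * x) = q at *
  field_simp
  linear_combination -4 * (1 + q) * hqe

lemma hasSum_one_div_sinh_sq {x : ℝ} (hx : 0 < x) :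
    HasSum (fun m : ℕ ↦ 4 * ((m : ℝ) + 1) * exp (-2 * x) ^ (m + 1)) (1 / sinh x ^ 2) := by
  have hq : ‖exp (-2 * x)‖ < 1 := by simpa using hx
  rw [one_div_sinh_sq_eq hx.ne', ← mul_one_div]
  refine ((hasSum_succ_mul_geometric hq).mul_left _).congr_fun fun m ↦ ?_
  ring

lemma hasSum_cosh_div_sinh_pow_three {x : ℝ} (hx : 0 < x) :
    HasSum (fun m : ℕ ↦ 4 * ((m : ℝ) + 1) ^ 2 * exp (-2 * x) ^ (m + 1))
      (cosh x / sinh x ^ 3) := by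
  have hq : ‖exp (-2 * x)‖ < 1 := by simpa using hx
  rw [cosh_div_sinh_pow_three_eq hx.ne', mul_div_assoc]
  refine ((hasSum_succ_sq_mul_geometric hq).mul_left _).congr_fun fun m ↦ ?_
  ring

lemma exp_neg_two_mul_succ_mul (y : ℝ) (n : ℕ) :
    exp (-2 * ((n + 1) * y)) = exp (-2 * y) ^ (n + 1) := by
  rw [← exp_nat_mul]; push_cast; ring_nf

noncomputable def lambertKernel (y : ℝ) (n m : ℕ) : ℝ :=
  4 * ((n : ℝ) + 1) * ((m : ℝ) + 1) ^ 2 * exp (-2 * y) ^ ((n + 1) * (m + 1))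

lemma hasSum_lambertKernel_row {y : ℝ} (hy : 0 < y) (n : ℕ) :
    HasSum (lambertKernel y n) ((n + 1) * cosh ((n + 1) * y) / sinh ((n + 1) * y) ^ 3) := by
  rw [mul_div_assoc]
  refine ((hasSum_cosh_div_sinh_pow_three (by positivity)).mul_left ((n : ℝ) + 1)).congr_fun
    fun m ↦ ?_
  rw [lambertKernel, exp_neg_two_mul_succ_mul, ← pow_mul]
  ring

lemma hasSum_lambertKernel_column {y : ℝ} (hy : 0 < y) (m : ℕ) :
    HasSum (fun n ↦ lambertKernel y n m) ((m + 1) ^ 2 / sinh ((m + 1) * y) ^ 2) := by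
  rw [div_eq_mul_one_div]
  refine ((hasSum_one_div_sinh_sq (by positivity)).mul_left (((m : ℝ) + 1) ^ 2)).congr_fun
    fun n ↦ ?_
  rw [lambertKernel, exp_neg_two_mul_succ_mul, ← pow_mul]
  ring

lemma summable_uncurry_lambertKernel {y : ℝ} (hy : 0 < y) :
    Summable (Function.uncurry (lambertKernel y)) := by
  set q := exp (-2 * y)
  have hq0 : 0 ≤ q := (exp_pos _).le
  have hq1 : q ≤ 1 := by simpa [q] using hy.le
  have hrow : Summable fun n : ℕ ↦ 4 * ((n : ℝ) + 1) * q ^ (n + 1) :=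
    (hasSum_one_div_sinh_sq hy).summable
  have hcol : Summable fun m : ℕ ↦ ((m : ℝ) + 1) ^ 2 * q ^ m :=
    (hasSum_succ_sq_mul_geometric (by simpa [q] using hy)).summable
  refine (hrow.mul_of_nonneg hcol (fun n ↦ by positivity) fun m ↦ by positivity).of_nonneg_of_le
    (fun p ↦ by simp only [Function.uncurry, lambertKernel]; positivity) fun ⟨n, m⟩ ↦ ?_
  have hpow : q ^ ((n + 1) * (m + 1)) ≤ q ^ (n + 1) * q ^ m := by
    rw [← pow_add]
    exact pow_le_pow_of_le_one hq0 hq1 (by nlinarith)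
  calc lambertKernel y n m
      = 4 * ((n : ℝ) + 1) * ((m : ℝ) + 1) ^ 2 * q ^ ((n + 1) * (m + 1)) := rfl
    _ ≤ 4 * ((n : ℝ) + 1) * ((m : ℝ) + 1) ^ 2 * (q ^ (n + 1) * q ^ m) := by gcongr
    _ = 4 * ((n : ℝ) + 1) * q ^ (n + 1) * (((m : ℝ) + 1) ^ 2 * q ^ m) := by ring

theorem stmt3 (y : ℝ) (hy : 0 < y) :
    ∑' n : ℕ, ((n + 1 : ℝ) * Real.cosh ((n + 1) * y) / (Real.sinh ((n + 1) * y)) ^ 3)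
      = ∑' n : ℕ, ((n + 1 : ℝ) ^ 2 / (Real.sinh ((n + 1) * y)) ^ 2) := by
  calc _ = ∑' n, ∑' m, lambertKernel y n m :=
        tsum_congr fun n ↦ (hasSum_lambertKernel_row hy n).tsum_eq.symm
    _ = ∑' m, ∑' n, lambertKernel y n m := (summable_uncurry_lambertKernel hy).tsum_comm.symm
    _ = _ := tsum_congr fun m ↦ (hasSum_lambertKernel_column hy m).tsum_eq
end

section
/- For every integer n and complex s, the function π/sinh(πs) has a simple pole at s = ni with Laurent expansion π/sinh(πs) = (−1)ⁿ ( 1/(s−ni) + 2 ∑_{k=1}^∞ (−1)ᵏ η(2k) (s−ni)^{2k−1} ) valid for 0 < |s−ni| < 1, where η(s) = ∑_{m=1}^∞ (−1)^{m−1}/m^s is the Dirichlet eta function. -/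
/-!
Combining the Mittag-Leffler expansion of the cotangent with `1 / sin z = cot (z / 2) - cot z`
gives `π / sin (π x) = 1 / x + ∑_{m ≥ 1} (-1) ^ m (1 / (x - m) + 1 / (x + m))`: the half-angle
cotangent contributes every even-indexed term twice. For `|x| < 1` each term is a geometric
series in `x² / m²`, and summing the absolutely convergent double series over `m` first yields
`η (2k + 2)` as the coefficient of `x ^ (2k + 1)`. The expansion of `π / sinh (π w)` follows from
`sin (π w i) = i sinh (π w)`, and moving the centre to `n i` costs the factor `(-1) ^ n` by the
antiperiodicity of `sinh` with period `π i`.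
-/

open Real Complex

lemma Complex.one_div_sin_eq_cot_half_sub_cot {z : ℂ} (hz : sin z ≠ 0) :
    1 / sin z = cot (z / 2) - cot z := by
  obtain ⟨y, rfl⟩ : ∃ y, z = 2 * y := ⟨z / 2, by ring⟩
  rw [sin_two_mul] at hz
  have hsin : sin y ≠ 0 := fun h => hz (by rw [h]; ring)
  have hcos : cos y ≠ 0 := fun h => hz (by rw [h]; ring)
  rw [mul_div_cancel_left₀ y two_ne_zero, cot_eq_cos_div_sin, cot_eq_cos_div_sin, sin_two_mul,
    cos_two_mul]
  field_simp
  ring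

lemma Complex.div_two_mem_integerComplement {x : ℂ} (hx : x ∈ integerComplement) :
    x / 2 ∈ integerComplement := by
  rintro ⟨n, hn⟩
  exact hx ⟨2 * n, by push_cast; rw [hn]; ring⟩

lemma cotTerm_div_two (x : ℂ) (n : ℕ) : cotTerm (x / 2) n = 2 * cotTerm x (2 * n + 1) := by
  have key : ∀ a : ℂ, 1 / (x / 2 + a) = 2 * (1 / (x + 2 * a)) := fun a => by
    rw [show x / 2 + a = (x + 2 * a) / 2 by ring, one_div_div, mul_one_div]
  simp only [cotTerm, sub_eq_add_neg, key]
  push_cast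
  ring

lemma hasSum_cotTerm {x : ℂ} (hx : x ∈ integerComplement) :
    HasSum (cotTerm x) (π * cot (π * x) - 1 / x) :=
  cot_series_rep' hx ▸ (summable_cotTerm hx).hasSum

lemma hasSum_neg_one_pow_mul_cotTerm {x : ℂ} (hx : x ∈ integerComplement) :
    HasSum (fun n : ℕ => (-1) ^ (n + 1) * cotTerm x n) (π / sin (π * x) - 1 / x) := by
  have hodd : HasSum (fun k => cotTerm x (2 * k + 1))
      ((π * cot (π * (x / 2)) - 1 / (x / 2)) / 2) := by
    simpa [cotTerm_div_two] using (hasSum_cotTerm (div_two_mem_integerComplement hx)).div_const 2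
  obtain ⟨e, heven⟩ : Summable fun k => cotTerm x (2 * k) :=
    (summable_cotTerm hx).comp_injective (mul_right_injective₀ two_ne_zero)
  have hsplit : π * cot (π * x) - 1 / x = e + (π * cot (π * (x / 2)) - 1 / (x / 2)) / 2 :=
    (hasSum_cotTerm hx).unique (heven.even_add_odd hodd)
  have hsin : π / sin (π * x) = π * cot (π * (x / 2)) - π * cot (π * x) := by
    rw [div_eq_mul_one_div, one_div_sin_eq_cot_half_sub_cot (sin_pi_mul_ne_zero hx), mul_div_assoc,
      mul_sub]
  have hsign : HasSum (fun n : ℕ => (-1) ^ (n + 1) * cotTerm x n)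
      (-e + (π * cot (π * (x / 2)) - 1 / (x / 2)) / 2) :=
    HasSum.even_add_odd (by simpa [pow_succ, pow_mul] using heven.neg)
      (by simpa [pow_succ, pow_mul] using hodd)
  convert hsign using 1
  rw [hsin]
  linear_combination -hsplit

lemma Complex.mem_integerComplement_of_norm_lt_one {x : ℂ} (hx0 : x ≠ 0) (hx1 : ‖x‖ < 1) :
    x ∈ integerComplement := by
  rintro ⟨m, rfl⟩
  rw [norm_intCast, ← Int.cast_abs, ← Int.cast_one, Int.cast_lt, Int.abs_lt_one_iff] at hx1
  exact hx0 (by simp [hx1])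

lemma Complex.norm_natCast_add_one (n : ℕ) : ‖(n : ℂ) + 1‖ = n + 1 := by
  exact_mod_cast Complex.norm_natCast (n + 1)

lemma hasSum_pow_div_pow_eq_cotTerm {x : ℂ} {n : ℕ} (hx : ‖x‖ < n + 1) :
    HasSum (fun k : ℕ => x ^ (2 * k + 1) / (n + 1) ^ (2 * k + 2)) (-cotTerm x n / 2) := by
  set c : ℂ := n + 1
  have hc0 : c ≠ 0 := Nat.cast_add_one_ne_zero n
  have hlt : ‖x‖ < ‖c‖ := by rwa [norm_natCast_add_one]
  have hsub : x - c ≠ 0 := sub_ne_zero.mpr fun h => hlt.ne (by rw [h])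
  have hadd : x + c ≠ 0 := fun h => hlt.ne (by rw [eq_neg_of_add_eq_zero_left h, norm_neg])
  have hxc : ‖x / c‖ < 1 := by rwa [norm_div, div_lt_one (norm_pos_iff.mpr hc0)]
  have hr : ‖(x / c) ^ 2‖ < 1 := by
    rw [norm_pow]; exact pow_lt_one₀ (norm_nonneg _) hxc two_ne_zero
  have hgeom := (hasSum_geometric_of_norm_lt_one hr).mul_left (x / c ^ 2)
  have hterm : ∀ k : ℕ, x ^ (2 * k + 1) / c ^ (2 * k + 2) = x / c ^ 2 * ((x / c) ^ 2) ^ k := by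
    intro k
    rw [← pow_mul, div_pow]
    field_simp
    ring
  have hval : -cotTerm x n / 2 = x / c ^ 2 * (1 - (x / c) ^ 2)⁻¹ := by
    have hcx : c ^ 2 - x ^ 2 ≠ 0 := by
      rw [show c ^ 2 - x ^ 2 = -((x - c) * (x + c)) by ring]
      exact neg_ne_zero.mpr (mul_ne_zero hsub hadd)
    change -(1 / (x - c) + 1 / (x + c)) / 2 = _
    rw [div_pow, one_sub_div (pow_ne_zero 2 hc0), inv_div]
    field_simp
    ring
  rw [funext hterm, hval]
  exact hgeom

lemma summable_neg_one_pow_div_mul_pow {x : ℂ} (hx : ‖x‖ < 1) :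
    Summable (Function.uncurry fun n k : ℕ =>
      (-1 : ℂ) ^ n / (n + 1) ^ (2 * k + 2) * x ^ (2 * k + 1)) := by
  have hinv : Summable fun n : ℕ => 1 / ((n : ℝ) + 1) ^ 2 := by
    simpa using (summable_nat_add_iff 1).mpr (Real.summable_one_div_nat_pow.mpr one_lt_two)
  refine Summable.of_norm_bounded ((hinv.mul_of_nonneg (summable_geometric_of_lt_one
    (norm_nonneg x) hx) (fun _ => by positivity) (fun _ => by positivity))) ?_
  rintro ⟨n, k⟩
  have h1 : (1 : ℝ) ≤ n + 1 := by simp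
  simp only [Function.uncurry_apply_pair, norm_mul, norm_div, norm_pow, norm_neg, norm_one, one_pow]
  rw [norm_natCast_add_one]
  exact mul_le_mul (one_div_pow_le_one_div_pow_of_le h1 (by omega))
    (pow_le_pow_of_le_one (norm_nonneg x) hx.le (by omega)) (by positivity) (by positivity)

theorem pi_div_sin_eq_laurent {x : ℂ} (hx0 : x ≠ 0) (hx1 : ‖x‖ < 1) :
    π / sin (π * x) = 1 / x + 2 * ∑' k : ℕ,
      (∑' n : ℕ, (-1 : ℂ) ^ n / (n + 1) ^ (2 * k + 2)) * x ^ (2 * k + 1) := by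
  have hfiber (n : ℕ) : (-1) ^ (n + 1) * cotTerm x n
      = 2 * ∑' k : ℕ, (-1 : ℂ) ^ n / (n + 1) ^ (2 * k + 2) * x ^ (2 * k + 1) := by
    have hgeom := hasSum_pow_div_pow_eq_cotTerm (n := n) (hx1.trans_le (by simp))
    simp_rw [div_mul_eq_mul_div, mul_div_assoc, tsum_mul_left, hgeom.tsum_eq]
    ring
  calc π / sin (π * x) = 1 / x + ∑' n : ℕ, (-1) ^ (n + 1) * cotTerm x n := by
        rw [(hasSum_neg_one_pow_mul_cotTerm (mem_integerComplement_of_norm_lt_one hx0 hx1)).tsum_eq]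
        ring
    _ = 1 / x + 2 * ∑' (n : ℕ) (k : ℕ),
          (-1 : ℂ) ^ n / (n + 1) ^ (2 * k + 2) * x ^ (2 * k + 1) := by
        rw [tsum_congr hfiber, tsum_mul_left]
    _ = _ := by
        rw [← (summable_neg_one_pow_div_mul_pow hx1).tsum_comm]
        simp_rw [tsum_mul_right]

lemma pi_div_sinh_eq_I_mul_pi_div_sin (z : ℂ) :
    π / sinh (π * z) = I * (π / sin (π * (z * I))) := by
  rw [← mul_assoc, sin_mul_I, mul_div_assoc', mul_comm I, mul_div_mul_right _ _ I_ne_zero]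

theorem pi_div_sinh_eq_laurent {w : ℂ} (hw0 : w ≠ 0) (hw1 : ‖w‖ < 1) :
    π / sinh (π * w) = 1 / w + 2 * ∑' k : ℕ, (-1) ^ (k + 1)
      * ((∑' m : ℕ, (-1 : ℂ) ^ m / (m + 1) ^ (2 * (k + 1))) * w ^ (2 * (k + 1) - 1)) := by
  have hterm (k : ℕ) (c : ℂ) :
      I * (c * (w * I) ^ (2 * k + 1)) = (-1) ^ (k + 1) * (c * w ^ (2 * (k + 1) - 1)) := by
    rw [show 2 * (k + 1) - 1 = 2 * k + 1 by omega, mul_pow, pow_succ I, pow_mul I, I_sq]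
    linear_combination (c * w ^ (2 * k + 1) * (-1) ^ k) * I_sq
  rw [pi_div_sinh_eq_I_mul_pi_div_sin, pi_div_sin_eq_laurent (mul_ne_zero hw0 I_ne_zero)
    (by simpa using hw1), mul_add, mul_left_comm I 2, ← tsum_mul_left]
  simp_rw [hterm, ← mul_add_one (2 : ℕ)]
  congr 1
  field_simp

theorem stmt18 (n : ℤ) (s : ℂ) (h0 : 0 < ‖s - n * Complex.I‖)
    (h1 : ‖s - n * Complex.I‖ < 1) :
    (π : ℂ) / Complex.sinh (π * s)
      = (-1) ^ n * (1 / (s - n * Complex.I)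
        + 2 * ∑' k : ℕ, (-1) ^ (k + 1)
            * ((∑' m : ℕ, (-1 : ℂ) ^ m / (m + 1) ^ (2 * (k + 1)))
            * (s - n * Complex.I) ^ (2 * (k + 1) - 1))) := by
  have hsinh : sinh (π * s) = (-1) ^ n * sinh (π * (s - n * I)) := by
    rw [← Int.cast_negOnePow ℂ, ← sinh_antiperiodic.add_int_mul_eq]
    ring_nf
  rw [← pi_div_sinh_eq_laurent (norm_pos_iff.mp h0) h1, hsinh, mul_comm, ← div_div,
    div_eq_mul_inv _ ((-1 : ℂ) ^ n), ← inv_zpow, inv_neg, inv_one, mul_comm]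
end
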